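/- The map ψ : R^4 → R^4 given by ψ(x1, x2, y1, y2) = (1/√2)·(x1 − y2, −x1 − y2, x2 + y1, x2 − y1) is orthogonal (preserves the Euclidean inner product), preserves the Liouville form λ0 = (1/2)·(y1 dx1 − x1 dy1 + y2 dx2 − x2 dy2), and satisfies ψ ∘ ĝ = g ∘ ψ, where ĝ(w1, w2) = (e^{2πi/3} w1, e^{2πi/3} w2) in coordinates w1 = x1 + i x2, w2 = y1 + i y2, and g(z1, z2) = (e^{2πi/3} z1, e^{4πi/3} z2) in coordinates z1 = x1 + i y1, z2 = x2 + i y2. -/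

import Mathlib

/-! `ψ` is `1/√2` times an integer matrix that doubles both the Euclidean pairing and `λ0`. In complex coordinates `ψ` intertwines rotation by `θ` of both `w1, w2` with rotation
by `θ` of `z1` and by `-θ` of `z2`; for `θ = 2π/3` the latter is `g_{3,2}` because
`e^{4πi/3} = e^{-2πi/3}`. -/

open Real

/-- The linear map ψ on ℝ⁴ with coordinates (x1, x2, y1, y2). -/
noncomputable def psiMap : ℝ × ℝ × ℝ × ℝ → ℝ × ℝ × ℝ × ℝ :=
  fun v =>
    let x1 := v.1; let x2 := v.2.1; let y1 := v.2.2.1; let y2 := v.2.2.2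
    ((1 / Real.sqrt 2) * (x1 - y2), (1 / Real.sqrt 2) * (-x1 - y2),
     (1 / Real.sqrt 2) * (x2 + y1), (1 / Real.sqrt 2) * (x2 - y1))

/-- The action ĝ = ĝ_{3,1}: multiplication by e^{2πi/3} on w1 = x1 + i x2 and
    on w2 = y1 + i y2. -/
noncomputable def gHat : ℝ × ℝ × ℝ × ℝ → ℝ × ℝ × ℝ × ℝ :=
  fun v =>
    let x1 := v.1; let x2 := v.2.1; let y1 := v.2.2.1; let y2 := v.2.2.2
    let c := Real.cos (2 * π / 3); let s := Real.sin (2 * π / 3)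
    (c * x1 - s * x2, s * x1 + c * x2, c * y1 - s * y2, s * y1 + c * y2)

/-- The action g = g_{3,2}: multiplication by e^{2πi/3} on z1 = x1 + i y1 and
    by e^{4πi/3} on z2 = x2 + i y2. -/
noncomputable def gStd : ℝ × ℝ × ℝ × ℝ → ℝ × ℝ × ℝ × ℝ :=
  fun v =>
    let x1 := v.1; let x2 := v.2.1; let y1 := v.2.2.1; let y2 := v.2.2.2
    let c := Real.cos (2 * π / 3); let s := Real.sin (2 * π / 3)
    let c' := Real.cos (4 * π / 3); let s' := Real.sin (4 * π / 3)
    (c * x1 - s * y1, c' * x2 - s' * y2, s * x1 + c * y1, s' * x2 + c' * y2)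

/-- The standard Euclidean inner product on ℝ⁴. -/
noncomputable def dot4 (v w : ℝ × ℝ × ℝ × ℝ) : ℝ :=
  v.1 * w.1 + v.2.1 * w.2.1 + v.2.2.1 * w.2.2.1 + v.2.2.2 * w.2.2.2

/-- The Liouville form λ0 = (1/2)(y1 dx1 − x1 dy1 + y2 dx2 − x2 dy2),
    evaluated at the point v on the tangent vector u
    (coordinates ordered (x1, x2, y1, y2)). -/
noncomputable def liouville (v u : ℝ × ℝ × ℝ × ℝ) : ℝ :=
  (1 / 2) * (v.2.2.1 * u.1 - v.1 * u.2.2.1 + v.2.2.2 * u.2.1 - v.2.1 * u.2.2.2)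

noncomputable def rotHat (θ : ℝ) : ℝ × ℝ × ℝ × ℝ → ℝ × ℝ × ℝ × ℝ :=
  fun v =>
    (cos θ * v.1 - sin θ * v.2.1, sin θ * v.1 + cos θ * v.2.1,
     cos θ * v.2.2.1 - sin θ * v.2.2.2, sin θ * v.2.2.1 + cos θ * v.2.2.2)

noncomputable def rotStd (θ₁ θ₂ : ℝ) : ℝ × ℝ × ℝ × ℝ → ℝ × ℝ × ℝ × ℝ :=
  fun v =>
    (cos θ₁ * v.1 - sin θ₁ * v.2.2.1, cos θ₂ * v.2.1 - sin θ₂ * v.2.2.2,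
     sin θ₁ * v.1 + cos θ₁ * v.2.2.1, sin θ₂ * v.2.1 + cos θ₂ * v.2.2.2)

theorem gHat_eq_rotHat : gHat = rotHat (2 * π / 3) := rfl

theorem gStd_eq_rotStd : gStd = rotStd (2 * π / 3) (4 * π / 3) := rfl

theorem rotStd_add_two_pi (θ₁ θ₂ : ℝ) : rotStd θ₁ (θ₂ + 2 * π) = rotStd θ₁ θ₂ := by
  unfold rotStd
  rw [cos_add_two_pi, sin_add_two_pi]

theorem psiMap_rotHat (θ : ℝ) (v : ℝ × ℝ × ℝ × ℝ) :
    psiMap (rotHat θ v) = rotStd θ (-θ) (psiMap v) := by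
  simp only [psiMap, rotHat, rotStd, cos_neg, sin_neg, Prod.mk.injEq]
  refine ⟨by ring, by ring, by ring, by ring⟩

theorem one_div_sqrt_two_mul_mul (a b : ℝ) :
    (1 / √2 * a) * (1 / √2 * b) = a * b / 2 := by
  calc (1 / √2 * a) * (1 / √2 * b) = a * b / (√2 * √2) := by ring
    _ = a * b / 2 := by rw [mul_self_sqrt zero_le_two]

theorem dot4_psiMap (v w : ℝ × ℝ × ℝ × ℝ) : dot4 (psiMap v) (psiMap w) = dot4 v w := by
  simp only [psiMap, dot4, one_div_sqrt_two_mul_mul]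
  ring

theorem liouville_psiMap (v u : ℝ × ℝ × ℝ × ℝ) :
    liouville (psiMap v) (psiMap u) = liouville v u := by
  simp only [psiMap, liouville, one_div_sqrt_two_mul_mul]
  ring

theorem stmt_17 :
    (∀ v w : ℝ × ℝ × ℝ × ℝ, dot4 (psiMap v) (psiMap w) = dot4 v w)
    ∧ (∀ v u : ℝ × ℝ × ℝ × ℝ, liouville (psiMap v) (psiMap u) = liouville v u)
    ∧ (∀ v : ℝ × ℝ × ℝ × ℝ, psiMap (gHat v) = gStd (psiMap v)) := by
  refine ⟨dot4_psiMap, liouville_psiMap, fun v => ?_⟩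
  have hangle : 4 * π / 3 = -(2 * π / 3) + 2 * π := by ring
  rw [gHat_eq_rotHat, gStd_eq_rotStd, hangle, rotStd_add_two_pi, psiMap_rotHat]
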